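/- Let A be an abelian group (written multiplicatively), M a type, and m̄ ∈ M a fixed element. For n ≥ 2 let i_n : M^n → M^{n+1} be the map (m₁,…,m_n) ↦ (m̄, m₁,…,m_n). Then for every α : M^n → A one has the contracting-homotopy identity (∂α) ∘ i_n = α^{-1} · ∂(α^{-1} ∘ i_{n-1}), as functions M^n → A. -/

import Mathlib

/- The factor of `∂α (m̄, m)` omitting `m̄` is `(α m)⁻¹`. Every other factor omits a coordinate
of `m` and keeps `m̄` in front; since that coordinate sits one place further right in `(m̄, m)`
than in `m`, its sign is flipped, which is absorbed by replacing `α` with `α⁻¹`. -/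

/-- The alternating-omission (Čech/simplicial) differential on `A`-valued
functions on finite powers of `M`: for `α : Mⁿ → A`,
`∂α(m₁,…,m_{n+1}) = ∏_{j=1}^{n+1} α(m₁,…,m̂_j,…,m_{n+1})^{(-1)^j}`
(the `j`-th factor in Lean's 0-indexing carries the sign `(-1)^{j+1}`). -/
def altOmissionDiff {M : Type*} {A : Type*} [CommGroup A] {n : ℕ}
    (α : (Fin n → M) → A) : (Fin (n + 1) → M) → A :=
  fun m => ∏ j : Fin (n + 1), (α (m ∘ j.succAbove)) ^ ((-1 : ℤ) ^ ((j : ℕ) + 1))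

theorem altOmissionDiff_cons_apply {M : Type*} {A : Type*} [CommGroup A] {n : ℕ}
    (mbar : M) (α : (Fin (n + 1) → M) → A) (m : Fin (n + 1) → M) :
    altOmissionDiff α (Fin.cons mbar m) =
      (α m)⁻¹ * altOmissionDiff (fun x : Fin n → M => (α (Fin.cons mbar x))⁻¹) m := by
  simp only [altOmissionDiff]
  rw [Fin.prod_univ_succ]
  simp only [Fin.succAbove_zero, Fin.cons_comp_succ, Fin.cons_comp_succ_succAbove, Fin.val_zero,
    Fin.val_succ, zero_add, pow_one, zpow_neg_one, inv_zpow', pow_succ _ ((_ : ℕ) + 1), mul_neg_one]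
  rfl

/-- For `n = k + 2 ≥ 2` and the inclusions `i_n : Mⁿ → M^{n+1}`,
`(m₁,…,m_n) ↦ (m̄, m₁,…,m_n)` (given by `Fin.cons m̄`), every `α : Mⁿ → A`
satisfies the contracting-homotopy identity
`(∂α) ∘ i_n = α⁻¹ · ∂(α⁻¹ ∘ i_{n-1})` pointwise on `Mⁿ`. -/
theorem altOmissionDiff_cons {M : Type*} {A : Type*} [CommGroup A]
    (mbar : M) (k : ℕ) (α : (Fin (k + 2) → M) → A) (m : Fin (k + 2) → M) :
    altOmissionDiff α (Fin.cons mbar m) =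
      (α m)⁻¹ *
        altOmissionDiff (fun x : Fin (k + 1) → M => (α (Fin.cons mbar x))⁻¹) m :=
  altOmissionDiff_cons_apply mbar α m
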